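/- (Two-dimensional case of the free-product conjecture.) The subgroup of GL(2,ℝ) generated by R₂ and T₂ is the free product of ⟨R₂⟩ ≅ ℤ/3ℤ and ⟨T₂⟩ ≅ ℤ. Precisely: R₂ has order 3, T₂ has infinite order, and the group homomorphism from the free product (ℤ/3ℤ) ∗ ℤ to GL(2,ℝ) sending the generator of ℤ/3ℤ to R₂ and the generator 1 ∈ ℤ to T₂ is injective. -/

import Mathlib

open Matrix Pointwise

/-- The matrix `R₂`. -/
def R2 : Matrix (Fin 2) (Fin 2) ℝ := !![0,-1; 1,-1]

/-- The matrix `T₂`. -/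
def T2 : Matrix (Fin 2) (Fin 2) ℝ := !![1,0; -3,1]

/-- `R₂` as an element of `GL(2,ℝ)` (its inverse is `R₂²`, since `R₂³ = I`). -/
noncomputable def R2GL : Matrix.GeneralLinearGroup (Fin 2) ℝ :=
  ⟨R2, R2 ^ 2,
   by rw [Matrix.one_fin_two]; simp [R2, pow_succ, Matrix.mul_fin_two],
   by rw [Matrix.one_fin_two]; simp [R2, pow_succ, Matrix.mul_fin_two]⟩

/-- `T₂` as an element of `GL(2,ℝ)`. -/
noncomputable def T2GL : Matrix.GeneralLinearGroup (Fin 2) ℝ :=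
  ⟨T2, !![1,0; 3,1],
   by rw [Matrix.one_fin_two]; simp [T2, Matrix.mul_fin_two],
   by rw [Matrix.one_fin_two]; simp [T2, Matrix.mul_fin_two]⟩

/-! ### Auxiliary material for the ping-pong argument -/

/-- A copy of `ℝ²` carrying the `mulVec` action of `GL(2,ℝ)`. -/
def PPV : Type := Fin 2 → ℝ

namespace PPV
def x (v : PPV) : ℝ := v 0
def y (v : PPV) : ℝ := v 1
noncomputable def slope (v : PPV) : ℝ := v.y / v.x
end PPV

instance : MulAction (Matrix.GeneralLinearGroup (Fin 2) ℝ) PPV where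
  smul g v := (g : Matrix (Fin 2) (Fin 2) ℝ).mulVec v
  one_smul v := Matrix.one_mulVec v
  mul_smul g h v := by
    show ((g : Matrix (Fin 2) (Fin 2) ℝ) * (h : Matrix (Fin 2) (Fin 2) ℝ)).mulVec v
      = (g : Matrix (Fin 2) (Fin 2) ℝ).mulVec ((h : Matrix (Fin 2) (Fin 2) ℝ).mulVec v)
    exact (Matrix.mulVec_mulVec _ _ _).symm

lemma ppv_smul_def (g : Matrix.GeneralLinearGroup (Fin 2) ℝ) (v : PPV) :
    g • v = (g : Matrix (Fin 2) (Fin 2) ℝ).mulVec v := rfl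

lemma T2GL_zpow_coe (n : ℤ) :
    ((T2GL ^ n : Matrix.GeneralLinearGroup (Fin 2) ℝ) : Matrix (Fin 2) (Fin 2) ℝ)
      = !![1, 0; -3 * (n : ℝ), 1] := by
  induction n using Int.induction_on with
  | zero => simp [Matrix.one_fin_two]
  | succ n ih =>
    rw [_root_.zpow_add_one, Units.val_mul, ih]
    rw [show ((T2GL : Matrix.GeneralLinearGroup (Fin 2) ℝ) : Matrix (Fin 2) (Fin 2) ℝ) = T2 from rfl]
    ext i j
    fin_cases i <;> fin_cases j <;> simp [T2, Matrix.mul_fin_two] <;> push_cast <;> ring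
  | pred n ih =>
    rw [_root_.zpow_sub_one, Units.val_mul, ih]
    rw [show ((T2GL⁻¹ : Matrix.GeneralLinearGroup (Fin 2) ℝ) : Matrix (Fin 2) (Fin 2) ℝ) = !![1,0;3,1] from rfl]
    ext i j
    fin_cases i <;> fin_cases j <;> simp [Matrix.mul_fin_two] <;> push_cast <;> ring

lemma R2GL_sq_coe :
    ((R2GL ^ 2 : Matrix.GeneralLinearGroup (Fin 2) ℝ) : Matrix (Fin 2) (Fin 2) ℝ)
      = !![-1, 1; -1, 0] := by
  rw [Units.val_pow_eq_pow_val]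
  show R2 ^ 2 = _
  rw [pow_two, R2]
  ext i j
  fin_cases i <;> fin_cases j <;> simp [Matrix.mul_fin_two]

/-- Ping-pong set for the rotation factor. -/
def setA : Set PPV :=
  {v | v.x ≠ 0 ∧ Irrational v.slope ∧ -1 < v.slope ∧ v.slope < 2}

/-- Ping-pong set for the translation factor. -/
def setB : Set PPV :=
  {v | v.x ≠ 0 ∧ Irrational v.slope ∧ (v.slope < -1 ∨ 2 < v.slope)}

lemma sqrt2_gt_one : (1:ℝ) < Real.sqrt 2 := by
  nlinarith [Real.sq_sqrt (by norm_num : (2:ℝ) ≥ 0), Real.sqrt_nonneg 2]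

lemma sqrt2_lt_two : Real.sqrt 2 < 2 := by
  nlinarith [Real.sq_sqrt (by norm_num : (2:ℝ) ≥ 0), Real.sqrt_nonneg 2]

lemma setA_nonempty : setA.Nonempty := by
  refine ⟨(![1, Real.sqrt 2 - 1] : Fin 2 → ℝ), ?_, ?_, ?_, ?_⟩
  · show (![1, Real.sqrt 2 - 1] : Fin 2 → ℝ) 0 ≠ 0; norm_num
  · show Irrational ((![1, Real.sqrt 2 - 1] : Fin 2 → ℝ) 1 / (![1, Real.sqrt 2 - 1] : Fin 2 → ℝ) 0)
    simpa using irrational_sqrt_two.sub_intCast 1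
  · show -1 < (![1, Real.sqrt 2 - 1] : Fin 2 → ℝ) 1 / (![1, Real.sqrt 2 - 1] : Fin 2 → ℝ) 0
    simp
  · show (![1, Real.sqrt 2 - 1] : Fin 2 → ℝ) 1 / (![1, Real.sqrt 2 - 1] : Fin 2 → ℝ) 0 < 2
    simp; nlinarith [sqrt2_lt_two]

lemma setB_nonempty : setB.Nonempty := by
  refine ⟨(![1, Real.sqrt 2 + 2] : Fin 2 → ℝ), ?_, ?_, Or.inr ?_⟩
  · show (![1, Real.sqrt 2 + 2] : Fin 2 → ℝ) 0 ≠ 0; norm_num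
  · show Irrational ((![1, Real.sqrt 2 + 2] : Fin 2 → ℝ) 1 / (![1, Real.sqrt 2 + 2] : Fin 2 → ℝ) 0)
    simpa using irrational_sqrt_two.add_intCast 2
  · show 2 < (![1, Real.sqrt 2 + 2] : Fin 2 → ℝ) 1 / (![1, Real.sqrt 2 + 2] : Fin 2 → ℝ) 0
    simp [sqrt2_gt_one]

lemma setAB_disjoint : Disjoint setA setB := by
  rw [Set.disjoint_left]
  rintro v ⟨_, _, h1, h2⟩ ⟨_, _, h3 | h3⟩ <;> linarith

lemma mulVec_x (M : Matrix (Fin 2) (Fin 2) ℝ) (v : PPV) :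
    PPV.x (M.mulVec v) = M 0 0 * v.x + M 0 1 * v.y := by
  simp [PPV.x, PPV.y, Matrix.mulVec, dotProduct, Fin.sum_univ_two]

lemma mulVec_y (M : Matrix (Fin 2) (Fin 2) ℝ) (v : PPV) :
    PPV.y (M.mulVec v) = M 1 0 * v.x + M 1 1 * v.y := by
  simp [PPV.x, PPV.y, Matrix.mulVec, dotProduct, Fin.sum_univ_two]

lemma y_ne_zero_of_mem_setB {v : PPV} (hv : v ∈ setB) : v.y ≠ 0 := by
  obtain ⟨hx, _, hB⟩ := hv
  intro hy
  have : v.slope = 0 := by simp [PPV.slope, hy]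
  rcases hB with h | h <;> rw [this] at h <;> linarith

/-- `R₂` maps `B` into `A`. -/
lemma R_maps (v : PPV) (hv : v ∈ setB) : (R2.mulVec v : PPV) ∈ setA := by
  obtain ⟨hx, hirr, hB⟩ := hv
  have hy : v.y ≠ 0 := y_ne_zero_of_mem_setB ⟨hx, hirr, hB⟩
  have hwx : PPV.x (R2.mulVec v) = -v.y := by rw [mulVec_x]; simp [R2]
  have hwy : PPV.y (R2.mulVec v) = v.x - v.y := by rw [mulVec_y]; simp [R2]; ring
  have hslope : PPV.slope (R2.mulVec v) = 1 - (v.slope)⁻¹ := by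
    unfold PPV.slope; rw [hwx, hwy]
    field_simp
    ring
  have hmm : v.slope * (v.slope)⁻¹ = 1 :=
    mul_inv_cancel₀ (by simp [PPV.slope, hy, hx])
  refine ⟨by rw [hwx]; simpa using hy, ?_, ?_, ?_⟩
  · rw [hslope]
    simpa using (hirr.inv.intCast_sub 1)
  · rw [hslope]
    rcases hB with h | h
    · nlinarith
    · nlinarith
  · rw [hslope]
    rcases hB with h | h
    · nlinarith
    · nlinarith

/-- `R₂²` maps `B` into `A`. -/
lemma R2_maps (v : PPV) (hv : v ∈ setB) :
    ((!![-1,1;-1,0] : Matrix (Fin 2) (Fin 2) ℝ).mulVec v : PPV) ∈ setA := by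
  obtain ⟨hx, hirr, hB⟩ := hv
  set M : Matrix (Fin 2) (Fin 2) ℝ := !![-1,1;-1,0] with hM
  have hwx : PPV.x (M.mulVec v) = v.y - v.x := by rw [mulVec_x]; simp [hM]; ring
  have hwy : PPV.y (M.mulVec v) = -v.x := by rw [mulVec_y]; simp [hM]
  have hne : v.slope ≠ 1 := by rcases hB with h | h <;> intro He <;> rw [He] at h <;> linarith
  have hyx : v.y - v.x ≠ 0 := by
    intro h
    apply hne
    have : v.y = v.x := by linarith
    rw [PPV.slope, this, div_self hx]
  have hslope : PPV.slope (M.mulVec v) = (1 - v.slope)⁻¹ := by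
    unfold PPV.slope; rw [hwx, hwy]
    have h1x : 1 - v.y / v.x ≠ 0 := by
      intro h
      apply hne
      have : v.y / v.x = 1 := by linarith
      simpa [PPV.slope] using this
    rw [inv_eq_one_div]
    rw [div_eq_div_iff hyx (by intro h; apply h1x; linarith [h])]
    field_simp
    ring
  have hs1 : (1 - v.slope) * (1 - v.slope)⁻¹ = 1 := by
    apply mul_inv_cancel₀
    intro h; apply hne; linarith
  refine ⟨by rw [hwx]; exact hyx, ?_, ?_, ?_⟩
  · rw [hslope]
    simpa using (hirr.intCast_sub 1).inv
  · rw [hslope]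
    rcases hB with h | h
    · nlinarith
    · nlinarith
  · rw [hslope]
    rcases hB with h | h
    · nlinarith
    · nlinarith

/-- `T₂ⁿ` (n ≠ 0) maps `A` into `B`. -/
lemma T_maps (n : ℤ) (hn : n ≠ 0) (v : PPV) (hv : v ∈ setA) :
    ((!![1,0;-3*(n:ℝ),1] : Matrix (Fin 2) (Fin 2) ℝ).mulVec v : PPV) ∈ setB := by
  obtain ⟨hx, hirr, h1, h2⟩ := hv
  set M : Matrix (Fin 2) (Fin 2) ℝ := !![1,0;-3*(n:ℝ),1] with hM
  have hwx : PPV.x (M.mulVec v) = v.x := by rw [mulVec_x]; simp [hM]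
  have hwy : PPV.y (M.mulVec v) = -3*(n:ℝ) * v.x + v.y := by rw [mulVec_y]; simp [hM]
  have hslope : PPV.slope (M.mulVec v) = v.slope - 3*(n:ℝ) := by
    unfold PPV.slope; rw [hwx, hwy]
    field_simp
    ring
  refine ⟨by rw [hwx]; exact hx, ?_, ?_⟩
  · rw [hslope]
    rw [show (3*(n:ℝ)) = ((3*n : ℤ):ℝ) by push_cast; ring]
    exact hirr.sub_intCast _
  · rw [hslope]
    rcases lt_or_gt_of_ne hn with h | h
    · right
      have hn1 : n ≤ -1 := by omega
      have : (n:ℝ) ≤ -1 := by exact_mod_cast hn1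
      linarith
    · left
      have hn1 : 1 ≤ n := by omega
      have : (1:ℝ) ≤ (n:ℝ) := by exact_mod_cast hn1
      linarith

/-- The two factor groups of the free product, indexed by `Bool`. -/
def PPH : Bool → Type
  | true => Multiplicative (ZMod 3)
  | false => Multiplicative ℤ

instance (b : Bool) : Group (PPH b) := by
  cases b
  · exact (inferInstance : Group (Multiplicative ℤ))
  · exact (inferInstance : Group (Multiplicative (ZMod 3)))

/-- Inclusions of the factors into the binary coproduct. -/
def ppf : ∀ b : Bool, PPH b →* Monoid.Coprod (Multiplicative (ZMod 3)) (Multiplicative ℤ)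
  | true => Monoid.Coprod.inl
  | false => Monoid.Coprod.inr

/-- Comparison map from the indexed coproduct to the binary coproduct. -/
def ppψ : Monoid.CoprodI PPH →* Monoid.Coprod (Multiplicative (ZMod 3)) (Multiplicative ℤ) :=
  Monoid.CoprodI.lift ppf

lemma ppψ_surj : Function.Surjective ppψ := by
  intro c
  induction c using Monoid.Coprod.induction_on with
  | inl m =>
    exact ⟨Monoid.CoprodI.of (i := true) m, by simp [ppψ, Monoid.CoprodI.lift_of, ppf]; rfl⟩
  | inr n =>
    exact ⟨Monoid.CoprodI.of (i := false) n, by simp [ppψ, Monoid.CoprodI.lift_of, ppf]; rfl⟩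
  | mul x y hx hy =>
    obtain ⟨a, rfl⟩ := hx
    obtain ⟨b, rfl⟩ := hy
    exact ⟨a * b, map_mul _ _ _⟩

lemma zmod3_cases (h : Multiplicative (ZMod 3)) (h1 : h ≠ 1) :
    h = Multiplicative.ofAdd 1 ∨
      h = Multiplicative.ofAdd (1 : ZMod 3) * Multiplicative.ofAdd (1 : ZMod 3) := by
  revert h1
  revert h
  decide

lemma int_ofAdd_pow (h : Multiplicative ℤ) :
    h = (Multiplicative.ofAdd (1 : ℤ)) ^ (Multiplicative.toAdd h) := by
  rw [← ofAdd_zsmul]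
  simp

lemma card_mult_zmod3 : (3 : Cardinal) ≤ Cardinal.mk (PPH true) := by
  have h : Cardinal.mk (Multiplicative (ZMod 3)) = 3 := by
    rw [Cardinal.mk_fintype]
    simp
  exact le_of_eq
    (by rw [show Cardinal.mk (PPH true) = Cardinal.mk (Multiplicative (ZMod 3)) from rfl, h])

/-- The ping-pong sets, indexed by `Bool`. -/
def ppX : Bool → Set PPV
  | true => setA
  | false => setB

/-- The subgroup of `GL(2,ℝ)` generated by `R₂` and `T₂` is the free product
`ℤ/3ℤ ∗ ℤ`: `R₂` has order 3, `T₂` has infinite order, and the homomorphism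
from `(ℤ/3ℤ) ∗ ℤ` sending the generators to `R₂` and `T₂` is injective. -/
theorem free_product_Z3_Z :
    orderOf R2GL = 3 ∧ ¬ IsOfFinOrder T2GL ∧
    ∀ φ : Monoid.Coprod (Multiplicative (ZMod 3)) (Multiplicative ℤ) →*
        Matrix.GeneralLinearGroup (Fin 2) ℝ,
      φ (Monoid.Coprod.inl (Multiplicative.ofAdd (1 : ZMod 3))) = R2GL →
      φ (Monoid.Coprod.inr (Multiplicative.ofAdd (1 : ℤ))) = T2GL →
      Function.Injective φ := by
  refine ⟨?_, ?_, ?_⟩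
  · -- order of R2GL is 3
    haveI : Fact (Nat.Prime 3) := ⟨by norm_num⟩
    apply orderOf_eq_prime
    · apply Units.ext
      rw [Units.val_pow_eq_pow_val]
      show R2 ^ 3 = 1
      rw [show (3 : ℕ) = 2 + 1 from rfl, pow_succ, pow_two, R2, Matrix.one_fin_two]
      ext i j
      fin_cases i <;> fin_cases j <;> simp [Matrix.mul_fin_two]
    · intro h
      have h2 := congrArg (fun u => ((u : Matrix.GeneralLinearGroup (Fin 2) ℝ) :
        Matrix (Fin 2) (Fin 2) ℝ) 0 1) h
      simp [R2GL, R2, Matrix.one_apply] at h2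
  · -- T2GL has infinite order
    intro h
    obtain ⟨n, hn, hpow⟩ := isOfFinOrder_iff_pow_eq_one.mp h
    have h1 : ((T2GL ^ (n:ℤ) : Matrix.GeneralLinearGroup (Fin 2) ℝ) :
        Matrix (Fin 2) (Fin 2) ℝ) = !![1, 0; -3 * ((n:ℤ) : ℝ), 1] := T2GL_zpow_coe n
    rw [zpow_natCast, hpow] at h1
    have h2 := congrArg (fun M => M 1 0) h1
    simp [Matrix.one_apply] at h2
    have : (n : ℝ) = 0 := by linarith
    have : n = 0 := by exact_mod_cast this
    omega
  · -- injectivity via ping-pong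
    intro φ hl hr
    set F : ∀ b : Bool, PPH b →* Matrix.GeneralLinearGroup (Fin 2) ℝ :=
      fun b => (φ.comp ppψ).comp Monoid.CoprodI.of with hF
    have hF1 : F true (Multiplicative.ofAdd (1 : ZMod 3)) = R2GL := by
      rw [hF]
      simp only [MonoidHom.comp_apply]
      exact (congrArg φ (Monoid.CoprodI.lift_of (i := true) ppf _)).trans hl
    have hF2 : F false (Multiplicative.ofAdd (1 : ℤ)) = T2GL := by
      rw [hF]
      simp only [MonoidHom.comp_apply]
      exact (congrArg φ (Monoid.CoprodI.lift_of (i := false) ppf _)).trans hr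
    have hcard : (3 : Cardinal) ≤ Cardinal.mk Bool ∨ ∃ b, (3:Cardinal) ≤ Cardinal.mk (PPH b) :=
      Or.inr ⟨true, card_mult_zmod3⟩
    have hne : ∀ b, (ppX b).Nonempty := by
      intro b; cases b
      · exact setB_nonempty
      · exact setA_nonempty
    have hdisj : Pairwise (Function.onFun Disjoint ppX) := by
      intro i j hij
      cases i <;> cases j
      · exact absurd rfl hij
      · exact setAB_disjoint.symm
      · exact setAB_disjoint
      · exact absurd rfl hij
    have hpp : Pairwise fun i j => ∀ h : PPH i, h ≠ 1 → F i h • ppX j ⊆ ppX i := by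
      intro i j hij
      cases i <;> cases j
      · exact absurd rfl hij
      · -- i = false (translation), j = true (rotation): T^n maps A into B
        intro h h1 w hw
        obtain ⟨v, hv, rfl⟩ := hw
        change Multiplicative ℤ at h
        have hn : Multiplicative.toAdd h ≠ 0 := by
          intro h0
          apply h1
          show h = 1
          rw [int_ofAdd_pow h, h0, zpow_zero]
        have hFh : F false h = T2GL ^ (Multiplicative.toAdd h) := by
          conv_lhs => rw [int_ofAdd_pow h]
          refine (map_zpow (F false) _ _).trans ?_
          exact congrArg (· ^ Multiplicative.toAdd h) hF2
        show (F false h • v) ∈ setB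
        rw [hFh, ppv_smul_def, T2GL_zpow_coe]
        exact T_maps _ hn v hv
      · -- i = true (rotation), j = false (translation): R, R² map B into A
        intro h h1 w hw
        obtain ⟨v, hv, rfl⟩ := hw
        change Multiplicative (ZMod 3) at h
        show (F true h • v) ∈ setA
        have hRR : R2 * R2 = !![-1,1;-1,0] := by
          rw [← pow_two, ← R2GL_sq_coe, Units.val_pow_eq_pow_val]
          rfl
        rcases zmod3_cases h h1 with h2 | h2
        · have hFh : F true h = R2GL := by rw [h2]; exact hF1
          rw [hFh, ppv_smul_def]
          rw [show ((R2GL : Matrix.GeneralLinearGroup (Fin 2) ℝ) :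
            Matrix (Fin 2) (Fin 2) ℝ) = R2 from rfl]
          exact R_maps v hv
        · have hFh : F true h = R2GL * R2GL := by
            rw [h2]; refine (_root_.map_mul (F true) _ _).trans ?_
            exact congrArg₂ (· * ·) hF1 hF1
          rw [hFh, ppv_smul_def, Units.val_mul]
          rw [show ((R2GL : Matrix.GeneralLinearGroup (Fin 2) ℝ) :
            Matrix (Fin 2) (Fin 2) ℝ) = R2 from rfl]
          rw [hRR]
          exact R2_maps v hv
      · exact absurd rfl hij
    have hinj : Function.Injective (Monoid.CoprodI.lift F) :=
      Monoid.CoprodI.lift_injective_of_ping_pong F hcard ppX hne hdisj hpp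
    have hcomp : Monoid.CoprodI.lift F = φ.comp ppψ := by
      apply Monoid.CoprodI.ext_hom
      intro i
      ext h
      simp [Monoid.CoprodI.lift_of, hF]
    intro a b hab
    obtain ⟨a', rfl⟩ := ppψ_surj a
    obtain ⟨b', rfl⟩ := ppψ_surj b
    have : Monoid.CoprodI.lift F a' = Monoid.CoprodI.lift F b' := by
      rw [hcomp]; exact hab
    rw [hinj this]
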